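/- Let A and B be finite dimensional selfinjective k-algebras admitting algebra maps A → B → A composing to the identity with B projective as an A-module. Then dim(stmod A) ≤ dim(stmod B), where dim denotes the Rouquier dimension of a triangulated category. -/

import Mathlib

open CategoryTheory Function

section StableDimension

variable (R : Type) [Ring R]

/-- Two modules are stably isomorphic if they become isomorphic after adding projective
direct summands. -/
def stIso (X Y : ModuleCat.{0} R) : Prop :=
  ∃ P Q : ModuleCat.{0} R, Module.Projective R P ∧ Module.Projective R Q ∧
    Nonempty ((↥X × ↥P) ≃ₗ[R] (↥Y × ↥Q))

/-- `Y` is a cosyzygy (shift) of `X`: there is a short exact sequence `0 → X → P → Y → 0`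
with `P` projective.  For a selfinjective algebra this is the shift of the triangulated
structure on the stable module category. -/
def cosyzygyRel (X Y : ModuleCat.{0} R) : Prop :=
  ∃ P : ModuleCat.{0} R, Module.Projective R P ∧
    ∃ (f : X →ₗ[R] P) (g : P →ₗ[R] Y), Injective f ∧ Surjective g ∧ Exact f g

/-- Closure of a class of modules under (positive and negative) shifts in the stable
module category. -/
def shiftCl (C : Set (ModuleCat.{0} R)) : Set (ModuleCat.{0} R) :=
  {Y | ∃ X ∈ C, Relation.ReflTransGen
    (fun U V => cosyzygyRel R U V ∨ cosyzygyRel R V U) X Y}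

/-- `⟨C⟩`: closure under finite direct sums, direct summands and shifts, up to stable
isomorphism. -/
def spanCl (C : Set (ModuleCat.{0} R)) : Set (ModuleCat.{0} R) :=
  {X | ∃ (m : ℕ) (f : Fin m → ModuleCat.{0} R), (∀ i, f i ∈ shiftCl R C) ∧
    ∃ Z : ModuleCat.{0} R,
      stIso R (ModuleCat.of R (↥X × ↥Z)) (ModuleCat.of R (∀ i, ↥(f i)))}

/-- `C ∗ D` in the stable module category: objects `X` fitting (up to stable isomorphism)
in a triangle `C → X → D`, i.e. a short exact sequence `0 → C → E → D → 0` with `E`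
stably isomorphic to `X`. -/
def starCl (C D : Set (ModuleCat.{0} R)) : Set (ModuleCat.{0} R) :=
  {X | ∃ U ∈ C, ∃ W ∈ D, ∃ (E : ModuleCat.{0} R) (f : U →ₗ[R] E) (g : E →ₗ[R] W),
    Injective f ∧ Surjective g ∧ Exact f g ∧ stIso R E X}

/-- `⟨C⟩_n`: the `n`-step thickening of `C`, with `⟨C⟩₀` the zero objects (the projective
modules) and `⟨C⟩_{n} = ⟨⟨C⟩_{n−1} ∗ ⟨C⟩⟩`. -/
def levelCl (C : Set (ModuleCat.{0} R)) : ℕ → Set (ModuleCat.{0} R)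
  | 0 => {X | Module.Projective R X}
  | n + 1 => spanCl R (starCl R (levelCl C n) (spanCl R C))

/-- The Rouquier dimension of the stable module category of `R` is at most `d`: some
finitely generated module `M` generates every finitely generated module in `d+1` steps. -/
def stmodDimLE (d : ℕ) : Prop :=
  ∃ M : ModuleCat.{0} R, Module.Finite R M ∧
    ∀ X : ModuleCat.{0} R, Module.Finite R X → X ∈ levelCl R {M} (d + 1)

/-- The Rouquier dimension of the stable module category of `R`. -/
noncomputable def stmodDim : ℕ∞ :=
  sInf {e : ℕ∞ | ∃ d : ℕ, e = d ∧ stmodDimLE R d}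

end StableDimension

/-! Restriction of scalars along `i` is exact and, since `B` is finite and projective over `A`,
preserves finitely generated and projective modules. It therefore carries shifts, finite sums,
summands, extensions and stable isomorphisms over `B` to the same over `A`, so it maps `⟨M⟩_n` into
`⟨i^* M⟩_n`. Since `π ∘ i = id`, every finitely generated `A`-module `X` is the restriction along
`i` of the finitely generated `B`-module `π^* X`; hence if `M` generates `stmod B` in `d + 1`
steps, `i^* M` generates `stmod A` in `d + 1` steps. -/

theorem Module.Projective.trans (R S M : Type*) [Semiring R] [Semiring S] [Module R S]
    [IsScalarTower R S S] [AddCommMonoid M] [Module R M] [Module S M] [IsScalarTower R S M]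
    [Module.Projective R S] [hM : Module.Projective S M] : Module.Projective R M := by
  classical
  obtain ⟨s, hs⟩ := hM
  have : Module.Projective R (M →₀ S) := .of_equiv (finsuppLequivDFinsupp R).symm
  exact .of_split (s.restrictScalars R) ((Finsupp.linearCombination S id).restrictScalars R)
    (LinearMap.ext hs)

namespace ModuleCat

variable {R S : Type} [Ring R] [Ring S] (φ : R →+* S)

local notation "res" => Functor.obj (restrictScalars φ)

theorem restrictScalars_isScalarTower (M : ModuleCat S) :
    letI := φ.toModule
    IsScalarTower R S (res M) :=
  letI := φ.toModule
  ⟨fun r s m => mul_smul (φ r) s m⟩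

theorem projective_restrictScalars (hS : Module.Projective R (res (of S S))) {M : ModuleCat S}
    (hM : Module.Projective S M) : Module.Projective R (res M) :=
  letI := φ.toModule
  haveI : Module.Projective R S := hS
  haveI : IsScalarTower R S S := ⟨fun r s t => mul_assoc (φ r) s t⟩
  haveI : IsScalarTower R S (res M) := restrictScalars_isScalarTower φ M
  haveI : Module.Projective S (res M) := hM
  .trans R S (res M)

theorem finite_restrictScalars (hS : Module.Finite R (res (of S S))) {M : ModuleCat S}
    (hM : Module.Finite S M) : Module.Finite R (res M) :=
  letI := φ.toModule
  haveI : Module.Finite R S := hS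
  haveI : IsScalarTower R S (res M) := restrictScalars_isScalarTower φ M
  haveI : Module.Finite S (res M) := hM
  .trans S _

theorem stIso_restrictScalars (hS : Module.Projective R (res (of S S))) {X Y : ModuleCat S}
    (h : stIso S X Y) : stIso R (res X) (res Y) := by
  obtain ⟨P, Q, hP, hQ, ⟨e⟩⟩ := h
  exact ⟨res P, res Q, projective_restrictScalars φ hS hP, projective_restrictScalars φ hS hQ,
    ⟨{ e with map_smul' := fun r x => e.map_smul (φ r) x }⟩⟩

theorem cosyzygyRel_restrictScalars (hS : Module.Projective R (res (of S S)))
    {X Y : ModuleCat S} (h : cosyzygyRel S X Y) : cosyzygyRel R (res X) (res Y) := by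
  obtain ⟨P, hP, f, g, hf, hg, hfg⟩ := h
  exact ⟨res P, projective_restrictScalars φ hS hP, ((restrictScalars φ).map (ofHom f)).hom,
    ((restrictScalars φ).map (ofHom g)).hom, hf, hg, hfg⟩

theorem finite_restrictScalars_of_comp_eq_id (ψ : S →+* R) (h : φ.comp ψ = RingHom.id S)
    {M : ModuleCat S} (hM : Module.Finite S M) : Module.Finite R (res M) :=
  .of_surjective (M := M) (P := res M) (σ := ψ) (hM := hM)
    { toFun := id
      map_add' := fun _ _ => rfl
      map_smul' := fun s x => by
        show s • x = φ (ψ s) • x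
        rw [← RingHom.comp_apply, h, RingHom.id_apply] }
    surjective_id

variable {C : Set (ModuleCat S)} {C₁ : Set (ModuleCat R)}

theorem restrictScalars_mapsTo_shiftCl (hS : Module.Projective R (res (of S S)))
    (hC : Set.MapsTo res C C₁) : Set.MapsTo res (shiftCl S C) (shiftCl R C₁) := by
  rintro X ⟨X₀, hX₀, hX₀X⟩
  exact ⟨res X₀, hC hX₀, hX₀X.lift res fun _ _ =>
    Or.imp (cosyzygyRel_restrictScalars φ hS) (cosyzygyRel_restrictScalars φ hS)⟩

theorem restrictScalars_mapsTo_spanCl (hS : Module.Projective R (res (of S S)))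
    (hC : Set.MapsTo res C C₁) : Set.MapsTo res (spanCl S C) (spanCl R C₁) := by
  rintro X ⟨m, f, hf, Z, hXZ⟩
  exact ⟨m, fun j => res (f j), fun j => restrictScalars_mapsTo_shiftCl φ hS hC (hf j), res Z,
    stIso_restrictScalars φ hS hXZ⟩

theorem restrictScalars_mapsTo_starCl (hS : Module.Projective R (res (of S S)))
    {D : Set (ModuleCat S)} {D₁ : Set (ModuleCat R)}
    (hC : Set.MapsTo res C C₁) (hD : Set.MapsTo res D D₁) :
    Set.MapsTo res (starCl S C D) (starCl R C₁ D₁) := by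
  rintro X ⟨U, hU, W, hW, E, f, g, hf, hg, hfg, hEX⟩
  exact ⟨res U, hC hU, res W, hD hW, res E, ((restrictScalars φ).map (ofHom f)).hom,
    ((restrictScalars φ).map (ofHom g)).hom, hf, hg, hfg, stIso_restrictScalars φ hS hEX⟩

theorem restrictScalars_mapsTo_levelCl (hS : Module.Projective R (res (of S S)))
    (hC : Set.MapsTo res C C₁) (n : ℕ) : Set.MapsTo res (levelCl S C n) (levelCl R C₁ n) := by
  induction n with
  | zero => exact fun _ => projective_restrictScalars φ hS
  | succ n ih =>
    exact restrictScalars_mapsTo_spanCl φ hS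
      (restrictScalars_mapsTo_starCl φ hS ih (restrictScalars_mapsTo_spanCl φ hS hC))

end ModuleCat

theorem mem_spanCl_of_linearEquiv {R : Type} [Ring R] {C : Set (ModuleCat R)}
    {X Y : ModuleCat R} (e : X ≃ₗ[R] Y) (hY : Y ∈ spanCl R C) : X ∈ spanCl R C := by
  obtain ⟨m, f, hf, Z, P, Q, hP, hQ, ⟨u⟩⟩ := hY
  exact ⟨m, f, hf, Z, P, Q, hP, hQ,
    ⟨((e.prodCongr (LinearEquiv.refl R Z)).prodCongr (LinearEquiv.refl R P)).trans u⟩⟩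

theorem mem_levelCl_of_linearEquiv {R : Type} [Ring R] {C : Set (ModuleCat R)}
    {X Y : ModuleCat R} (e : X ≃ₗ[R] Y) {n : ℕ} (hY : Y ∈ levelCl R C n) :
    X ∈ levelCl R C n := by
  cases n with
  | zero =>
    have : Module.Projective R Y := hY
    exact .of_equiv e.symm
  | succ n => exact mem_spanCl_of_linearEquiv e hY

open ModuleCat in
theorem stmodDimLE_of_retract {A B : Type} [Ring A] [Ring B] (i : A →+* B) (π : B →+* A)
    (hπi : π.comp i = RingHom.id A)
    (hfin : Module.Finite A ((restrictScalars i).obj (of B B)))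
    (hproj : Module.Projective A ((restrictScalars i).obj (of B B)))
    {d : ℕ} (h : stmodDimLE B d) : stmodDimLE A d := by
  obtain ⟨M, hMfin, hM⟩ := h
  refine ⟨(restrictScalars i).obj M, finite_restrictScalars i hfin hMfin, fun X hX => ?_⟩
  have hX' : Module.Finite B ((restrictScalars π).obj X) :=
    finite_restrictScalars_of_comp_eq_id π i hπi hX
  have e : X ≅ (restrictScalars i).obj ((restrictScalars π).obj X) :=
    (restrictScalarsId'App _ hπi X).symm ≪≫ restrictScalarsComp'App i π _ rfl X
  have hM₁ : Set.MapsTo (restrictScalars i).obj {M} {(restrictScalars i).obj M} :=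
    Set.mapsTo_singleton.2 (Set.mem_singleton _)
  exact mem_levelCl_of_linearEquiv e.toLinearEquiv <|
    restrictScalars_mapsTo_levelCl i hproj hM₁ _ (hM _ hX')

theorem stmodDim_le_of_stmodDimLE {A B : Type} [Ring A] [Ring B]
    (h : ∀ d, stmodDimLE B d → stmodDimLE A d) : stmodDim A ≤ stmodDim B :=
  sInf_le_sInf fun _ ⟨d, hd, hBd⟩ => ⟨d, hd, h d hBd⟩

theorem stmodDim_le_of_retract (k : Type) [Field k]
    (A B : Type) [Ring A] [Ring B] [Algebra k A] [Algebra k B]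
    [FiniteDimensional k B]
    (i : A →ₐ[k] B) (π : B →ₐ[k] A) (hπi : π.comp i = AlgHom.id k A)
    (hproj : Projective ((ModuleCat.restrictScalars i.toRingHom).obj (ModuleCat.of B B))) :
    stmodDim A ≤ stmodDim B := by
  let _ := i.toRingHom.toModule
  have : IsScalarTower k A B := ⟨fun c a b => by
    show i (c • a) * b = c • (i a * b)
    rw [map_smul, smul_mul_assoc]⟩
  have hfin : Module.Finite A B := .of_restrictScalars_finite k A B
  have hproj' := ModuleCat.projective_of_module_projective
    ((ModuleCat.restrictScalars i.toRingHom).obj (ModuleCat.of B B))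
  exact stmodDim_le_of_stmodDimLE fun _ =>
    stmodDimLE_of_retract i.toRingHom π.toRingHom (congrArg AlgHom.toRingHom hπi) hfin hproj'
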